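/- Let a uniform distribution assign probability 1/3 to each of three outcomes s1, s2, s3, where s1 is labeled {a1}, s2 is labeled {a2}, and s3 is labeled {a1, a2}. Then Pr(a1 ∧ a2) / Pr(a2) = 1/2, but Pr(a1 ∧ a2)/Pr(a2) is not an element of the set {0, 1/3, 2/3, 1} of probabilities expressible as Pr(E) for any event E over these three outcomes. -/
import Mathlib


/-- Three equally likely outcomes `s1 = 0`, `s2 = 1`, `s3 = 2`; `a1` holds at `{0, 2}`
and `a2` holds at `{1, 2}`; the probability of an event `E` is `|E|/3`. Then
`Pr(a1 ∧ a2) / Pr(a2) = 1/2`, the ratio is not in `{0, 1/3, 2/3, 1}`, and every event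
over the three outcomes has probability in `{0, 1/3, 2/3, 1}`. -/
theorem conditional_prob_not_expressible :
    let P : Finset (Fin 3) → ℝ := fun E => (E.card : ℝ) / 3
    let a1 : Finset (Fin 3) := {0, 2}
    let a2 : Finset (Fin 3) := {1, 2}
    P (a1 ∩ a2) / P a2 = 1/2 ∧
      P (a1 ∩ a2) / P a2 ∉ ({0, 1/3, 2/3, 1} : Set ℝ) ∧
      ∀ E : Finset (Fin 3), P E ∈ ({0, 1/3, 2/3, 1} : Set ℝ) := by
  intro P a1 a2
  have h12 : a1 ∩ a2 = ({2} : Finset (Fin 3)) := by decide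
  have hval : P (a1 ∩ a2) / P a2 = 1/2 := by
    simp [P, h12, a2]
    norm_num
  refine ⟨hval, ?_, ?_⟩
  · rw [hval]
    simp [Set.mem_insert_iff]
    norm_num
  · intro E
    have hc : E.card ≤ 3 := by simpa using E.card_le_univ
    interval_cases h : E.card <;> simp [P, h, Set.mem_insert_iff]
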